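/- Let α, β be complex numbers with Re(β) > 0 and Re(α) ≥ 1. Then (1/Γ(α)) ∫₀¹ (1−t)^{β−1} t^{α−1} log Γ(t) dt = (1/Γ(α)) Σ_{n=0}^{∞} (−1)^n C(β−1, n) Γ(n+α) · I₁₋^{n+α} log Γ(0), where I₁₋^{γ} log Γ(0) = (1/Γ(γ)) ∫₀¹ t^{γ−1} log Γ(t) dt and C(β−1, n) = (β−1)(β−2)⋯(β−n)/n!. In particular, the series on the right converges. -/

import Mathlib

open MeasureTheory Finset

/-- The generalized binomial coefficient `C(z, n) = z(z−1)⋯(z−n+1)/n!`, with `C(z,0) = 1`. -/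
noncomputable def genBinom (z : ℂ) (n : ℕ) : ℂ :=
  (∏ i ∈ Finset.range n, (z - i)) / (n.factorial : ℂ)

/-- The right-sided Riemann–Liouville fractional integral of `log Γ` of order `γ`
at the point `0` over `[0,1]`: `I₁₋^γ log Γ(0) = (1/Γ(γ)) ∫₀¹ t^{γ−1} log Γ(t) dt`. -/
noncomputable def rightRL (γ : ℂ) : ℂ :=
  (1 / Complex.Gamma γ) * ∫ t in (0:ℝ)..1, (t : ℂ) ^ (γ - 1) * (Real.log (Real.Gamma t) : ℂ)

lemma genBinom_succ (z : ℂ) (n : ℕ) :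
    genBinom z (n+1) = genBinom z n * ((z - n) / (n+1)) := by
  simp only [genBinom, Finset.prod_range_succ, Nat.factorial_succ, Nat.cast_mul]
  rw [div_mul_div_comm]
  congr 1
  push_cast
  ring

lemma genBinom_zero (z : ℂ) : genBinom z 0 = 1 := by simp [genBinom]

lemma norm_genBinom_succ (z : ℂ) (n : ℕ) :
    ‖genBinom z (n+1)‖ = ‖genBinom z n‖ * (‖z - n‖ / (n+1)) := by
  rw [genBinom_succ, norm_mul, norm_div]
  congr 2
  have : ((n:ℂ)+1) = ((n+1 : ℕ) : ℂ) := by push_cast; ring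
  rw [this, Complex.norm_natCast]
  push_cast; ring

lemma logGamma_nonpos {t : ℝ} (h1 : 1 ≤ t) (h2 : t ≤ 2) : Real.log (Real.Gamma t) ≤ 0 := by
  have h := Real.convexOn_log_Gamma.2 (show (1:ℝ) ∈ Set.Ioi 0 by norm_num)
    (show (2:ℝ) ∈ Set.Ioi 0 by norm_num) (show (0:ℝ) ≤ 2 - t by linarith)
    (show (0:ℝ) ≤ t - 1 by linarith) (show (2-t) + (t-1) = 1 by ring)
  simp only [Function.comp_apply, Real.Gamma_one, Real.Gamma_two, Real.log_one] at h
  have he : (2 - t) • (1:ℝ) + (t - 1) • (2:ℝ) = t := by simp only [smul_eq_mul]; ring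
  rw [he] at h
  simpa using h

lemma logGamma_nonneg {t : ℝ} (h0 : 0 < t) (h1 : t ≤ 1) : 0 ≤ Real.log (Real.Gamma t) := by
  have h2t : 0 < 2 - t := by linarith
  have h := Real.convexOn_log_Gamma.2 (Set.mem_Ioi.2 h0)
    (show (2:ℝ) ∈ Set.Ioi 0 by norm_num) (show (0:ℝ) ≤ 1/(2-t) by positivity)
    (show (0:ℝ) ≤ (1-t)/(2-t) by apply div_nonneg <;> linarith) (show 1/(2-t) + (1-t)/(2-t) = 1 by field_simp; ring)
  have he : (1/(2-t)) • t + ((1-t)/(2-t)) • (2:ℝ) = 1 := by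
    simp only [smul_eq_mul]; field_simp; ring
  rw [he] at h
  simp only [Function.comp_apply, Real.Gamma_one, Real.Gamma_two, Real.log_one] at h
  have h1t : 0 < 1/(2-t) := by positivity
  simp only [smul_eq_mul, mul_zero, add_zero] at h
  nlinarith [h]

lemma logGamma_le_neg_log {t : ℝ} (h0 : 0 < t) (h1 : t ≤ 1) :
    Real.log (Real.Gamma t) ≤ -Real.log t := by
  have hg := Real.Gamma_add_one (ne_of_gt h0)
  have hΓpos : 0 < Real.Gamma t := Real.Gamma_pos_of_pos h0
  have hlog : Real.log (Real.Gamma (t+1)) = Real.log t + Real.log (Real.Gamma t) := by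
    rw [hg, Real.log_mul (ne_of_gt h0) (ne_of_gt hΓpos)]
  have hle : Real.log (Real.Gamma (t+1)) ≤ 0 := logGamma_nonpos (by linarith) (by linarith)
  linarith

lemma aux_rec (c : ℂ) (n : ℕ) :
    genBinom c (n+1) * (-1)^(n+1) * (n+1) = ((n:ℂ) - c) * (genBinom c n * (-1)^n) := by
  rw [genBinom_succ]
  have h : ((n:ℂ)+1) ≠ 0 := by
    have := Nat.cast_add_one_ne_zero (R := ℂ) n
    simpa using this
  field_simp
  ring

lemma hasSum_genBinom (c : ℂ) (C : ℝ) (hC : ∀ n, ‖genBinom c n‖ ≤ C)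
    {x : ℝ} (h0 : 0 ≤ x) (h1 : x < 1) :
    HasSum (fun n => genBinom c n * (-(x:ℂ))^n) (((1 - x : ℝ) : ℂ) ^ c) := by
  set r : ℝ := (1 + x) / 2 with hr
  have hr0 : 0 < r := by positivity
  have hr1 : r < 1 := by rw [hr]; linarith
  have hxr : x < r := by rw [hr]; linarith
  set t : Set ℝ := Set.Ioo (-r) r with ht
  have hto : IsOpen t := isOpen_Ioo
  have htc : IsPreconnected t := (convex_Ioo _ _).isPreconnected
  set a : ℕ → ℂ := fun n => genBinom c n * (-1)^n with ha
  have hanorm : ∀ n, ‖a n‖ ≤ C := by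
    intro n
    rw [ha]
    simp only [norm_mul, norm_pow, norm_neg, norm_one, one_pow, mul_one]
    exact hC n
  have hC0 : 0 ≤ C := le_trans (norm_nonneg _) (hanorm 0)
  set g : ℕ → ℝ → ℂ := fun n y => a n * (y:ℂ)^n with hg
  set g' : ℕ → ℝ → ℂ := fun n y => a n * ((n:ℂ) * (y:ℂ)^(n-1)) with hg'
  set u : ℕ → ℝ := fun n => C * ((n:ℝ) * r^(n-1)) with hu
  have hus : Summable u := by
    apply Summable.mul_left
    rw [← summable_nat_add_iff 1]
    have : (fun n : ℕ => ((n+1 : ℕ):ℝ) * r^((n+1)-1)) = fun n : ℕ => (n:ℝ) * r^n + r^n := by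
      funext n
      push_cast
      simp [add_mul]
    rw [this]
    exact ((summable_pow_mul_geometric_of_norm_lt_one 1 (by
      rwa [Real.norm_eq_abs, abs_of_pos hr0])).congr (by intro n; simp)).add
      (summable_geometric_of_lt_one hr0.le hr1)
  have hderiv : ∀ n (y : ℝ), y ∈ t → HasDerivAt (g n) (g' n y) y := by
    intro n y _
    have h := (hasDerivAt_pow n ((y:ℝ):ℂ)).comp_ofReal
    exact h.const_mul (a n)
  have hbound : ∀ n (y : ℝ), y ∈ t → ‖g' n y‖ ≤ u n := by
    intro n y hy
    have hyr : |y| ≤ r := by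
      rw [abs_le]
      exact ⟨hy.1.le, hy.2.le⟩
    rw [hg']
    simp only [norm_mul, Complex.norm_natCast, norm_pow, Complex.norm_real, Real.norm_eq_abs]
    calc ‖a n‖ * ((n:ℝ) * |y|^(n-1)) ≤ C * ((n:ℝ) * r^(n-1)) := by
          apply mul_le_mul (hanorm n) _ (by positivity) hC0
          exact mul_le_mul_of_nonneg_left (pow_le_pow_left₀ (abs_nonneg y) hyr _) (Nat.cast_nonneg n)
      _ = u n := rfl
  have h0t : (0:ℝ) ∈ t := ⟨by linarith, hr0⟩
  have hg0 : Summable fun n => g n 0 := by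
    apply summable_of_ne_finset_zero (s := {0})
    intro n hn
    simp only [Finset.mem_singleton] at hn
    rw [hg]
    simp [zero_pow hn]
  -- S and its derivative
  set S : ℝ → ℂ := fun y => ∑' n, g n y with hS
  have hSd : ∀ y ∈ t, HasDerivAt S (∑' n, g' n y) y := fun y hy =>
    hasDerivAt_tsum_of_isPreconnected hus hto htc hderiv hbound h0t hg0 hy
  -- summability of g · y for y ∈ t
  have hgsum : ∀ y : ℝ, |y| ≤ r → Summable (fun n => g n y) := by
    intro y hy
    apply Summable.of_norm_bounded
      ((summable_geometric_of_lt_one hr0.le hr1).mul_left C)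
    intro n
    rw [hg]
    simp only [norm_mul, norm_pow, Complex.norm_real, Real.norm_eq_abs]
    exact mul_le_mul (hanorm n) (pow_le_pow_left₀ (abs_nonneg y) hy n) (by positivity) hC0
  have hgsum' : ∀ y : ℝ, |y| ≤ r → Summable (fun (n:ℕ) => (n:ℂ) * g n y) := by
    intro y hy
    apply Summable.of_norm_bounded (g := fun (n:ℕ) => C * ((n:ℝ) * r^n))
    · apply Summable.mul_left
      have := summable_pow_mul_geometric_of_norm_lt_one (R := ℝ) 1
        (by rwa [Real.norm_eq_abs, abs_of_pos hr0] : ‖r‖ < 1)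
      exact this.congr (by intro n; simp)
    · intro n
      rw [hg]
      simp only [norm_mul, norm_pow, Complex.norm_real, Real.norm_eq_abs, Complex.norm_natCast]
      calc (n:ℝ) * (‖a n‖ * |y|^n) ≤ (n:ℝ) * (C * r^n) := by
            apply mul_le_mul_of_nonneg_left _ (Nat.cast_nonneg n)
            exact mul_le_mul (hanorm n) (pow_le_pow_left₀ (abs_nonneg y) hy n) (by positivity) hC0
        _ = C * ((n:ℝ) * r^n) := by ring
  -- the ODE identity
  have hODE : ∀ y : ℝ, y ∈ t → (1 - (y:ℂ)) * (∑' n, g' n y) = -c * S y := by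
    intro y hy
    have hyr : |y| ≤ r := by rw [abs_le]; exact ⟨hy.1.le, hy.2.le⟩
    have hgsy := hgsum y hyr
    have hgsy' := hgsum' y hyr
    have hDsum : Summable (fun n => g' n y) :=
      Summable.of_norm_bounded hus (fun n => hbound n y hy)
    set D : ℂ := ∑' n, g' n y with hD
    have hsh : HasSum (fun n => g' (n+1) y) D := by
      have h := (hasSum_nat_add_iff' (f := fun n => g' n y) 1).2 hDsum.hasSum
      simpa [hg'] using h
    have hkey : (fun n => g' (n+1) y) = fun (n:ℕ) => (n:ℂ) * g n y - c * g n y := by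
      funext n
      have hrec := aux_rec c n
      rw [hg', hg]
      have h1 : (((n+1:ℕ)):ℂ) = (n:ℂ) + 1 := by push_cast; ring
      simp only [Nat.add_sub_cancel]
      rw [h1]
      calc a (n+1) * (((n:ℂ)+1) * (y:ℂ)^n) = (genBinom c (n+1) * (-1)^(n+1) * ((n:ℂ)+1)) * (y:ℂ)^n := by
            rw [ha]; ring
        _ = (((n:ℂ) - c) * (genBinom c n * (-1)^n)) * (y:ℂ)^n := by rw [hrec]
        _ = (n:ℂ) * (a n * (y:ℂ)^n) - c * (a n * (y:ℂ)^n) := by rw [ha]; ring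
    rw [hkey] at hsh
    have hEq1 : HasSum (fun (n:ℕ) => (n:ℂ) * g n y - c * g n y)
        ((∑' (n:ℕ), (n:ℂ) * g n y) - c * S y) := hgsy'.hasSum.sub (hgsy.hasSum.mul_left c)
    have hDval : D = (∑' (n:ℕ), (n:ℂ) * g n y) - c * S y := hsh.unique hEq1
    have hxD : HasSum (fun (n:ℕ) => (n:ℂ) * g n y) ((y:ℂ) * D) := by
      have h := hDsum.hasSum.mul_left ((y:ℝ):ℂ)
      have hfe : (fun (n:ℕ) => ((y:ℝ):ℂ) * g' n y) = fun (n:ℕ) => (n:ℂ) * g n y := by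
        funext n
        cases n with
        | zero => simp [hg', hg]
        | succ m =>
          rw [hg', hg]
          simp only [Nat.add_sub_cancel, Nat.cast_succ]
          rw [pow_succ]
          ring
      rwa [hfe] at h
    have hED : (∑' (n:ℕ), (n:ℂ) * g n y) = (y:ℂ) * D := hxD.tsum_eq
    rw [hED] at hDval
    linear_combination hDval
  -- φ and its derivative
  have hphi : ∀ y : ℝ, y ∈ t → HasDerivAt (fun y : ℝ => ((1 - y : ℝ) : ℂ) ^ (-c))
      (c * ((1 - y : ℝ) : ℂ) ^ (-c - 1)) y := by
    intro y hy
    have hy1 : (0:ℝ) < 1 - y := by have := hy.2; simp only [ht, Set.mem_Ioo] at hy; linarith [hy.2, hr1]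
    have hslit : (1 - ((y:ℝ):ℂ)) ∈ Complex.slitPlane := by
      rw [Complex.mem_slitPlane_iff]
      left
      simpa using hy1
    have hbase : HasDerivAt (fun z : ℂ => 1 - z) (-1 : ℂ) ((y:ℝ):ℂ) := by
      simpa using (hasDerivAt_id ((y:ℝ):ℂ)).const_sub 1
    have h := (HasDerivAt.cpow_const (c := -c) hbase (by simpa using hslit)).comp_ofReal
    have hfe : (fun y : ℝ => (1 - ((y:ℝ):ℂ)) ^ (-c)) = fun y : ℝ => ((1 - y : ℝ) : ℂ) ^ (-c) := by
      funext z; push_cast; ring_nf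
    rw [hfe] at h
    convert h using 1
    push_cast
    ring
  -- F = S * φ is constant
  set φ : ℝ → ℂ := fun y => ((1 - y : ℝ) : ℂ) ^ (-c) with hφ
  have hF : ∀ y : ℝ, y ∈ t → HasDerivAt (fun w => S w * φ w) 0 y := by
    intro y hy
    have h := (hSd y hy).mul (hphi y hy)
    convert h using 1
    case e'_4 => rfl
    case e'_8 => rfl
    have hy1 : (0:ℝ) < 1 - y := by simp only [ht, Set.mem_Ioo] at hy; linarith [hy.2, hr1]
    have hne : ((1 - y : ℝ) : ℂ) ≠ 0 := by
      simp only [ne_eq, Complex.ofReal_eq_zero]; linarith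
    have hsplit : ((1 - y : ℝ) : ℂ) ^ (-c) = ((1 - y : ℝ) : ℂ) ^ (-c - 1) * (1 - (y:ℂ)) := by
      rw [show (-c) = (-c-1) + 1 by ring, Complex.cpow_add _ _ hne, Complex.cpow_one]
      push_cast
      ring
    simp only [hφ]
    rw [hsplit]
    linear_combination (-(((1 - y : ℝ) : ℂ) ^ (-c - 1))) * (hODE y hy)
  -- constancy on [0, x]
  have hsub : Set.Icc (0:ℝ) x ⊆ t := by
    intro z hz
    constructor
    · linarith [hz.1]
    · exact lt_of_le_of_lt hz.2 hxr
  have hcont : ContinuousOn (fun w => S w * φ w) (Set.Icc 0 x) := fun z hz =>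
    ((hF z (hsub hz)).continuousAt).continuousWithinAt
  have hconst := constant_of_has_deriv_right_zero hcont (fun z hz =>
    (hF z (hsub (Set.mem_of_mem_of_subset hz Set.Ico_subset_Icc_self))).hasDerivWithinAt)
  have hFx : S x * φ x = S 0 * φ 0 := hconst x ⟨h0, le_refl x⟩
  have hφ0 : φ 0 = 1 := by
    rw [hφ]
    norm_num
  have hS0 : S 0 = 1 := by
    simp only [hS]
    rw [tsum_eq_single 0 (by
      intro n hn
      rw [hg]
      simp [zero_pow hn])]
    simp [hg, ha, genBinom]
  rw [hφ0, hS0] at hFx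
  norm_num at hFx
  have hne : ((1 - x : ℝ) : ℂ) ≠ 0 := by
    simp only [ne_eq, Complex.ofReal_eq_zero]
    linarith
  have h2 : φ x * ((1 - x : ℝ) : ℂ) ^ c = 1 := by
    rw [hφ, ← Complex.cpow_add _ _ hne]
    simp
  have hSx : S x = ((1 - x : ℝ) : ℂ) ^ c := by
    calc S x = (S x * φ x) * ((1 - x : ℝ) : ℂ) ^ c := by rw [mul_assoc, h2, mul_one]
      _ = ((1 - x : ℝ) : ℂ) ^ c := by rw [hFx, one_mul]
  have hsum := (hgsum x (by rw [abs_of_nonneg h0]; exact hxr.le)).hasSum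
  have hsx2 : (∑' n, g n x) = ((1 - x : ℝ) : ℂ) ^ c := hSx
  rw [hsx2] at hsum
  convert hsum using 2 with n
  rw [hg, ha, neg_pow]
  ring

lemma genBinom_bounds (β : ℂ) (hβ : 0 < β.re) :
    (∃ C : ℝ, ∀ n, ‖genBinom (β-1) n‖ ≤ C) ∧
      Summable (fun (n:ℕ) => ‖genBinom (β-1) n‖ / (n+1)) := by
  set s : ℝ := β.re with hs
  set s' : ℝ := min s 1 / 2 with hs'
  have hmin : 0 < min s 1 := lt_min hβ one_pos
  have hs'0 : 0 < s' := by rw [hs']; linarith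
  have hs's : s' < s := by
    rw [hs']
    rcases le_or_gt s 1 with h | h
    · rw [min_eq_left h]; linarith
    · rw [min_eq_right h.le]; linarith
  set δ : ℝ := s - s' with hδ
  have hδ0 : 0 < δ := by rw [hδ]; linarith
  set N : ℕ := ⌈s + (β.im)^2 / δ⌉₊ with hN
  -- key pointwise bound
  have habs : ∀ n : ℕ, N ≤ n → ‖β - 1 - n‖ ≤ (n+1) - s' := by
    intro n hn
    have hn1 : s + (β.im)^2 / δ ≤ (n:ℝ) + 1 := by
      calc s + (β.im)^2 / δ ≤ (⌈s + (β.im)^2 / δ⌉₊ : ℝ) := Nat.le_ceil _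
        _ ≤ (n:ℝ) := by exact_mod_cast Nat.cast_le.2 hn
        _ ≤ (n:ℝ) + 1 := by linarith
    have hb2 : (β.im)^2 / δ ≤ (n:ℝ) + 1 - s := by linarith
    have hb3 : (β.im)^2 ≤ ((n:ℝ) + 1 - s) * δ := by
      rw [div_le_iff₀ hδ0] at hb2
      linarith [hb2]
    have hre : (β - 1 - n).re = s - 1 - n := by simp [hs]
    have him : (β - 1 - n).im = β.im := by simp
    have hnormSq : Complex.normSq (β - 1 - n) = ((n:ℝ) + 1 - s)^2 + (β.im)^2 := by
      rw [Complex.normSq_apply, hre, him]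
      ring
    have hts : ((n:ℝ) + 1 - s') ^ 2 - (((n:ℝ) + 1 - s)^2 + (β.im)^2) ≥ 0 := by
      have expand : ((n:ℝ)+1-s')^2 - ((n:ℝ)+1-s)^2 = δ * (2*((n:ℝ)+1) - s - s') := by
        rw [hδ]; ring
      nlinarith [hb3, hn1, hs's]
    have h1 : ‖β - 1 - n‖ = Real.sqrt (((n:ℝ) + 1 - s)^2 + (β.im)^2) := by
      rw [Complex.norm_def, hnormSq]
    rw [h1]
    have hnn : 0 ≤ (n:ℝ) + 1 - s' := by
      have : s' < s := hs's
      linarith [hn1, div_nonneg (sq_nonneg β.im) hδ0.le]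
    calc Real.sqrt (((n:ℝ) + 1 - s)^2 + (β.im)^2) ≤ Real.sqrt (((n:ℝ)+1-s')^2) :=
          Real.sqrt_le_sqrt (by linarith [hts])
      _ = (n:ℝ) + 1 - s' := Real.sqrt_sq hnn
  -- step inequality
  set cn : ℕ → ℝ := fun n => ‖genBinom (β-1) n‖ with hcn
  have hcn0 : ∀ n, 0 ≤ cn n := fun n => norm_nonneg _
  have hstep : ∀ n : ℕ, N ≤ n → cn (n+1) ≤ cn n * (((n:ℝ)+1-s')/((n:ℝ)+1)) := by
    intro n hn
    simp only [hcn]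
    rw [norm_genBinom_succ]
    apply mul_le_mul_of_nonneg_left _ (norm_nonneg _)
    gcongr
    exact habs n hn
  -- decreasing from N
  have hdec : ∀ n : ℕ, N ≤ n → cn (n+1) ≤ cn n := by
    intro n hn
    calc cn (n+1) ≤ cn n * (((n:ℝ)+1-s')/((n:ℝ)+1)) := hstep n hn
      _ ≤ cn n * 1 := by
          apply mul_le_mul_of_nonneg_left _ (hcn0 n)
          rw [div_le_one (by positivity)]
          linarith [hs'0]
      _ = cn n := mul_one _
  have hmono : ∀ n : ℕ, N ≤ n → cn n ≤ cn N := by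
    intro n hn
    induction n, hn using Nat.le_induction with
    | base => exact le_refl _
    | succ m hm ih => exact (hdec m hm).trans ih
  constructor
  · refine ⟨∑ i ∈ Finset.range (N+1), cn i, fun n => ?_⟩
    rcases le_or_gt n N with h | h
    · exact Finset.single_le_sum (fun i _ => hcn0 i) (Finset.mem_range.2 (by omega))
    · exact (hmono n h.le).trans
        (Finset.single_le_sum (fun i _ => hcn0 i) (Finset.mem_range.2 (by omega)))
  · -- telescoping summability
    have hkey : ∀ k : ℕ, cn (N+k) / ((N+k:ℕ)+1) ≤ (cn (N+k) - cn (N+k+1)) / s' := by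
      intro k
      have h := hstep (N+k) (Nat.le_add_right N k)
      have hMpos : (0:ℝ) < ((N+k:ℕ):ℝ) + 1 := by positivity
      have h2 : cn (N+k+1) * (((N+k:ℕ):ℝ)+1) ≤ cn (N+k) * ((((N+k:ℕ):ℝ)+1) - s') := by
        calc cn (N+k+1) * (((N+k:ℕ):ℝ)+1)
            ≤ (cn (N+k) * ((((N+k:ℕ):ℝ)+1-s')/(((N+k:ℕ):ℝ)+1))) * (((N+k:ℕ):ℝ)+1) :=
              mul_le_mul_of_nonneg_right h hMpos.le
          _ = cn (N+k) * ((((N+k:ℕ):ℝ)+1) - s') := by field_simp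
      rw [div_le_div_iff₀ hMpos hs'0]
      nlinarith [h2, hcn0 (N+k)]
    have hsum1 : Summable (fun k : ℕ => cn (N+k) / ((N+k:ℕ)+1)) := by
      apply summable_of_sum_range_le (c := cn N / s')
        (fun k => div_nonneg (hcn0 _) (by positivity))
      intro K
      calc ∑ i ∈ Finset.range K, cn (N+i) / ((N+i:ℕ)+1)
          ≤ ∑ i ∈ Finset.range K, (cn (N+i) - cn (N+(i+1))) / s' :=
            Finset.sum_le_sum (fun i _ => hkey i)
        _ = (∑ i ∈ Finset.range K, (cn (N+i) - cn (N+(i+1)))) / s' :=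
            (Finset.sum_div _ _ _).symm
        _ = (cn (N+0) - cn (N+K)) / s' := by
            rw [Finset.sum_range_sub' (fun i => cn (N+i)) K]
        _ ≤ cn N / s' := by
            rw [div_le_div_iff_of_pos_right hs'0]
            have := hcn0 (N+K)
            simp only [Nat.add_zero]
            linarith
    have hsum2 : Summable (fun n : ℕ => cn n / ((n:ℝ)+1)) := by
      rw [← summable_nat_add_iff N]
      exact hsum1.congr (fun k => by rw [Nat.add_comm N k])
    exact hsum2.congr (fun n => rfl)


theorem right_fractional_one_sub_beta_raabe (α β : ℂ) (hβ : 0 < β.re) (hα : 1 ≤ α.re) :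
    Summable (fun n : ℕ =>
      (-1 : ℂ) ^ n * genBinom (β - 1) n * Complex.Gamma ((n : ℂ) + α) *
        rightRL ((n : ℂ) + α)) ∧
    (1 / Complex.Gamma α) *
        ∫ t in (0:ℝ)..1,
          ((1 - t : ℝ) : ℂ) ^ (β - 1) * (t : ℂ) ^ (α - 1) * (Real.log (Real.Gamma t) : ℂ)
      = (1 / Complex.Gamma α) *
          ∑' n : ℕ, (-1 : ℂ) ^ n * genBinom (β - 1) n * Complex.Gamma ((n : ℂ) + α) *
            rightRL ((n : ℂ) + α) := by
  obtain ⟨⟨C, hC⟩, hsumc⟩ := genBinom_bounds β hβ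
  set cn : ℕ → ℝ := fun n => ‖genBinom (β-1) n‖ with hcn
  have hcn0 : ∀ n, 0 ≤ cn n := fun n => norm_nonneg _
  set f : ℕ → ℝ → ℂ := fun n t => ((-1:ℂ)^n * genBinom (β-1) n) *
      ((t:ℂ)^((n:ℂ)+α-1) * (Real.log (Real.Gamma t) : ℂ)) with hf
  have hGne : ∀ n : ℕ, Complex.Gamma ((n:ℂ)+α) ≠ 0 := by
    intro n
    apply Complex.Gamma_ne_zero_of_re_pos
    simp only [Complex.add_re, Complex.natCast_re]
    have : (0:ℝ) ≤ (n:ℝ) := Nat.cast_nonneg n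
    linarith
  -- each term as a set integral
  have hterm : ∀ n : ℕ, (-1:ℂ)^n * genBinom (β-1) n * Complex.Gamma ((n:ℂ)+α)
      * rightRL ((n:ℂ)+α) = ∫ t in Set.Ioc (0:ℝ) 1, f n t := by
    intro n
    rw [rightRL, intervalIntegral.integral_of_le zero_le_one]
    simp only [hf]
    rw [MeasureTheory.integral_const_mul]
    have hone : Complex.Gamma ((n:ℂ)+α) * (1/Complex.Gamma ((n:ℂ)+α)) = 1 := by
      rw [mul_one_div, div_self (hGne n)]
    have hh : ∀ I a : ℂ, a * Complex.Gamma ((n:ℂ)+α) * (1/Complex.Gamma ((n:ℂ)+α) * I) = a * I := by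
      intro I a
      calc a * Complex.Gamma ((n:ℂ)+α) * (1/Complex.Gamma ((n:ℂ)+α) * I)
          = a * I * (Complex.Gamma ((n:ℂ)+α) * (1/Complex.Gamma ((n:ℂ)+α))) := by ring
        _ = a * I := by rw [hone, mul_one]
    exact hh _ _
  -- continuity on Ioc
  have hmeas : ∀ n : ℕ, ContinuousOn (f n) (Set.Ioc (0:ℝ) 1) := by
    intro n
    apply ContinuousOn.mul continuousOn_const
    apply ContinuousOn.mul
    · intro t ht
      exact (Complex.continuousAt_ofReal_cpow_const t _ (Or.inr (ne_of_gt ht.1))).continuousWithinAt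
    · intro t ht
      have hΓ : ContinuousAt Real.Gamma t := by
        apply (Real.differentiableAt_Gamma ?_).continuousAt
        intro m
        have h0 : (0:ℝ) ≤ m := Nat.cast_nonneg m
        have h1 := ht.1
        intro hh
        rw [hh] at h1
        linarith
      have hlog : ContinuousAt Real.log (Real.Gamma t) :=
        Real.continuousAt_log (Real.Gamma_pos_of_pos ht.1).ne'
      exact (Complex.continuous_ofReal.continuousAt.comp (hlog.comp hΓ)).continuousWithinAt
  -- norm bound
  have hbound : ∀ n : ℕ, ∀ t ∈ Set.Ioc (0:ℝ) 1, ‖f n t‖ ≤ 2 * cn n * t ^ ((n:ℝ) - 2⁻¹) := by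
    intro n t ht
    have ht0 := ht.1
    have hfn : ‖f n t‖ = cn n * (t ^ ((n:ℝ) + α.re - 1) * |Real.log (Real.Gamma t)|) := by
      simp only [hf, norm_mul, norm_pow, norm_neg, norm_one, one_pow, one_mul,
        Complex.norm_real, Real.norm_eq_abs]
      rw [Complex.norm_cpow_eq_rpow_re_of_pos ht0]
      have hre : ((n:ℂ)+α-1).re = (n:ℝ) + α.re - 1 := by
        simp [Complex.add_re, Complex.sub_re]
      rw [hre]
    rw [hfn]
    rcases eq_or_lt_of_le ht.2 with h1 | h1
    · rw [h1]
      simp only [Real.Gamma_one, Real.log_one, abs_zero, mul_zero]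
      positivity
    · have hLnn : 0 ≤ Real.log (Real.Gamma t) := logGamma_nonneg ht0 ht.2
      have hLle : Real.log (Real.Gamma t) ≤ -Real.log t := logGamma_le_neg_log ht0 ht.2
      have h2 : -Real.log t ≤ 2 * t ^ (-(2:ℝ)⁻¹) := by
        have h3 := Real.log_le_sub_one_of_pos (Real.rpow_pos_of_pos ht0 (-(2:ℝ)⁻¹))
        rw [Real.log_rpow ht0] at h3
        have h4 : (0:ℝ) < t ^ (-(2:ℝ)⁻¹) := Real.rpow_pos_of_pos ht0 _
        linarith
      have hexp : t ^ ((n:ℝ) + α.re - 1) ≤ t ^ ((n:ℝ)) :=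
        Real.rpow_le_rpow_of_exponent_ge ht0 ht.2 (by linarith)
      calc cn n * (t ^ ((n:ℝ) + α.re - 1) * |Real.log (Real.Gamma t)|)
          ≤ cn n * (t ^ ((n:ℝ)) * (2 * t ^ (-(2:ℝ)⁻¹))) := by
            apply mul_le_mul_of_nonneg_left _ (hcn0 n)
            apply mul_le_mul hexp _ (abs_nonneg _) (Real.rpow_nonneg ht0.le _)
            rw [abs_of_nonneg hLnn]
            exact hLle.trans h2
        _ = 2 * cn n * t ^ ((n:ℝ) - 2⁻¹) := by
            rw [show (n:ℝ) - 2⁻¹ = (n:ℝ) + (-2⁻¹) by ring, Real.rpow_add ht0]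
            ring
  -- integrability of the comparison function
  have hrint : ∀ n : ℕ, MeasureTheory.IntegrableOn
      (fun t : ℝ => 2 * cn n * t ^ ((n:ℝ) - 2⁻¹)) (Set.Ioc (0:ℝ) 1) := by
    intro n
    have h := intervalIntegral.intervalIntegrable_rpow' (a := 0) (b := 1)
      (r := (n:ℝ) - 2⁻¹) (by
        have : (0:ℝ) ≤ (n:ℝ) := Nat.cast_nonneg n
        linarith)
    rw [intervalIntegrable_iff_integrableOn_Ioc_of_le zero_le_one] at h
    exact h.const_mul _
  -- integrability of f n
  have hint : ∀ n : ℕ, MeasureTheory.IntegrableOn (f n) (Set.Ioc (0:ℝ) 1) := by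
    intro n
    apply MeasureTheory.Integrable.mono' (hrint n)
      ((hmeas n).aestronglyMeasurable measurableSet_Ioc)
    filter_upwards [MeasureTheory.ae_restrict_mem measurableSet_Ioc] with t ht
    exact hbound n t ht
  -- integral norm bound
  have hIb : ∀ n : ℕ, (∫ t in Set.Ioc (0:ℝ) 1, ‖f n t‖) ≤ 4 * (cn n / ((n:ℝ)+1)) := by
    intro n
    have h1 : (∫ t in Set.Ioc (0:ℝ) 1, ‖f n t‖)
        ≤ ∫ t in Set.Ioc (0:ℝ) 1, 2 * cn n * t ^ ((n:ℝ) - 2⁻¹) := by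
      apply MeasureTheory.setIntegral_mono_on (hint n).norm (hrint n) measurableSet_Ioc
      exact hbound n
    have h2 : (∫ t in Set.Ioc (0:ℝ) 1, 2 * cn n * t ^ ((n:ℝ) - 2⁻¹))
        = 2 * cn n * (1 / ((n:ℝ) + 2⁻¹)) := by
      rw [MeasureTheory.integral_const_mul, ← intervalIntegral.integral_of_le zero_le_one]
      rw [integral_rpow (Or.inl (by
        have : (0:ℝ) ≤ (n:ℝ) := Nat.cast_nonneg n
        linarith))]
      rw [Real.one_rpow, Real.zero_rpow (by
        have : (0:ℝ) ≤ (n:ℝ) := Nat.cast_nonneg n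
        intro hh
        nlinarith [hh])]
      have : (n:ℝ) - 2⁻¹ + 1 = (n:ℝ) + 2⁻¹ := by ring
      rw [this]
      ring
    have h3 : 2 * cn n * (1 / ((n:ℝ) + 2⁻¹)) ≤ 4 * (cn n / ((n:ℝ)+1)) := by
      have hn0 : (0:ℝ) ≤ (n:ℝ) := Nat.cast_nonneg n
      have e1 : (0:ℝ) < (n:ℝ)+2⁻¹ := by linarith
      have e2 : (0:ℝ) < (n:ℝ)+1 := by linarith
      rw [show (2:ℝ) * cn n * (1/((n:ℝ)+2⁻¹)) = (2*cn n)/((n:ℝ)+2⁻¹) by ring,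
        show (4:ℝ) * (cn n/((n:ℝ)+1)) = (4*cn n)/((n:ℝ)+1) by ring,
        div_le_div_iff₀ e1 e2]
      nlinarith [hcn0 n]
    linarith
  have hsumI : Summable (fun n : ℕ => ∫ t in Set.Ioc (0:ℝ) 1, ‖f n t‖) := by
    apply Summable.of_nonneg_of_le
      (fun n => MeasureTheory.integral_nonneg (fun t => norm_nonneg _))
      hIb ((hsumc.mul_left 4).congr (fun n => rfl))
  -- swap
  have hswap : (∑' n : ℕ, ∫ t in Set.Ioc (0:ℝ) 1, f n t)
      = ∫ t in Set.Ioc (0:ℝ) 1, (∑' n : ℕ, f n t) :=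
    MeasureTheory.integral_tsum_of_summable_integral_norm hint hsumI
  -- pointwise identity
  have hpt : ∀ t ∈ Set.Ioc (0:ℝ) 1, (∑' n : ℕ, f n t)
      = ((1 - t : ℝ) : ℂ) ^ (β - 1) * (t : ℂ) ^ (α - 1) * (Real.log (Real.Gamma t) : ℂ) := by
    intro t ht
    rcases eq_or_lt_of_le ht.2 with h1 | h1
    · rw [h1]
      simp [hf, Real.Gamma_one, Real.log_one]
    · have hbs := hasSum_genBinom (β-1) C hC ht.1.le h1
      have h2 := hbs.mul_right ((t:ℂ)^(α-1) * (Real.log (Real.Gamma t) : ℂ))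
      have hfe : (fun n : ℕ => genBinom (β-1) n * (-(t:ℂ))^n
          * ((t:ℂ)^(α-1) * (Real.log (Real.Gamma t) : ℂ))) = fun n => f n t := by
        funext n
        have htne : ((t:ℝ):ℂ) ≠ 0 := by
          simp only [ne_eq, Complex.ofReal_eq_zero]
          exact ht.1.ne'
        have he : ((n:ℂ)+α-1) = (n:ℂ) + (α-1) := by ring
        rw [hf]
        simp only []
        rw [he, Complex.cpow_add _ _ htne, Complex.cpow_natCast, neg_pow]
        ring
      rw [hfe] at h2
      rw [h2.tsum_eq, mul_assoc]
  constructor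
  · have he : (fun n : ℕ => (-1:ℂ)^n * genBinom (β-1) n * Complex.Gamma ((n:ℂ)+α)
        * rightRL ((n:ℂ)+α)) = fun n => ∫ t in Set.Ioc (0:ℝ) 1, f n t := funext hterm
    rw [he]
    exact Summable.of_norm_bounded hsumI
      (fun n => MeasureTheory.norm_integral_le_integral_norm _)
  · congr 1
    rw [intervalIntegral.integral_of_le zero_le_one]
    calc ∫ t in Set.Ioc (0:ℝ) 1,
          ((1 - t : ℝ) : ℂ) ^ (β - 1) * (t : ℂ) ^ (α - 1) * (Real.log (Real.Gamma t) : ℂ)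
        = ∫ t in Set.Ioc (0:ℝ) 1, (∑' n : ℕ, f n t) :=
          MeasureTheory.setIntegral_congr_fun measurableSet_Ioc (fun t ht => (hpt t ht).symm)
      _ = ∑' n : ℕ, ∫ t in Set.Ioc (0:ℝ) 1, f n t := hswap.symm
      _ = _ := tsum_congr (fun n => (hterm n).symm)
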